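/- Let ψ : [t₀,∞) → ℝ₊ be non-increasing with t·ψ(t) < 1 for all t ≥ t₀, and set Ψ(t) = 1/(1 − t·ψ(t)) − 1. If x ∈ [0,1) is irrational and a_{n+1}(x)·aₙ(x) ≤ Ψ(qₙ(x))/4 for all sufficiently large n, then x is ψ-Dirichlet improvable, i.e., for all sufficiently large t the system |qx − p| < ψ(t), |q| < t has a nontrivial integer solution. -/

import Mathlib

open Set MeasureTheory Filter

/-- The Gauss map `T(x) = 1/x - ⌊1/x⌋` (with `T 0 = 0`). -/
noncomputable def gaussMap (x : ℝ) : ℝ := Int.fract x⁻¹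

/-- The `n`-th partial quotient `aₙ(x)` (indexed from `n = 1`). -/
noncomputable def cfA (x : ℝ) (n : ℕ) : ℕ := ⌊(gaussMap^[n - 1] x)⁻¹⌋₊

/-- Numerators `pₙ` of the convergents of `[b 1, b 2, ...]`:
`p₀ = 0`, `p₁ = 1` (since `p₋₁ = 1`), `p_{n+2} = b (n+2) p_{n+1} + pₙ`. -/
def cfP (b : ℕ → ℕ) : ℕ → ℕ
  | 0 => 0
  | 1 => 1
  | n + 2 => b (n + 2) * cfP b (n + 1) + cfP b n

/-- Denominators (continuants) `qₙ` of the convergents of `[b 1, b 2, ...]`: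
`q₀ = 1`, `q₁ = b 1`, `q_{n+2} = b (n+2) q_{n+1} + qₙ`. -/
def cfQ (b : ℕ → ℕ) : ℕ → ℕ
  | 0 => 1
  | 1 => b 1
  | n + 2 => b (n + 2) * cfQ b (n + 1) + cfQ b n

/-- The cylinder `Iₙ(b 1, ..., b n)` of order `n`. -/
noncomputable def cfCyl (b : ℕ → ℕ) (n : ℕ) : Set ℝ :=
  {x ∈ Set.Ico (0 : ℝ) 1 | ∀ i, 1 ≤ i → i ≤ n → cfA x i = b i}

/-- `x` is `ψ`-Dirichlet improvable: for all sufficiently large `t` the system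
`|qx - p| < ψ(t)`, `|q| < t` has a nontrivial integer solution. -/
def DirichletImprovable (ψ : ℝ → ℝ) (x : ℝ) : Prop :=
  ∃ N : ℝ, ∀ t : ℝ, N < t → ∃ p q : ℤ, q ≠ 0 ∧ |(q : ℝ) * x - p| < ψ t ∧ |(q : ℝ)| < t

/-!
The convergent denominators `qₙ` of `x` are the natural candidates: one has
`|qₙ x - pₙ| = 1 / (qₙ₊₁ + qₙ Tⁿ⁺¹x)` with `T` the Gauss map. The hypothesis
`aₙ₊₂ aₙ₊₁ ≤ Ψ(qₙ₊₁) / 4` bounds `(aₙ₊₁ + 1)(aₙ₊₂ + 1)` by `Ψ(qₙ₊₁)`, and together with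
`qₙ₊₁ ≤ (aₙ₊₁ + 1) qₙ` and `Tⁿ⁺¹x > 1 / (aₙ₊₂ + 1)` this gives `|qₙ x - pₙ| < ψ(qₙ₊₁)`.
For large `t`, choosing `n` with `qₙ < t ≤ qₙ₊₁` and using that `ψ` is non-increasing,
`(pₙ, qₙ)` solves the system at `t`.
-/

section Continuants

variable (b : ℕ → ℕ)

theorem cfP_succ_mul_cfQ_sub_cfP_mul_cfQ_succ (n : ℕ) :
    (cfP b (n + 1) * cfQ b n - cfP b n * cfQ b (n + 1) : ℤ) = (-1) ^ n := by
  induction n with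
  | zero => simp [cfP, cfQ]
  | succ n ih =>
    simp only [cfP, cfQ, Nat.cast_add, Nat.cast_mul, pow_succ]
    linear_combination -ih

/-- `y n` plays the role of `Tⁿ x`, the reciprocal of the `(n+1)`-st complete quotient. -/
theorem mul_cfQ_add_eq_cfP_add {y : ℕ → ℝ} (hy : ∀ n, y n * (b (n + 1) + y (n + 1)) = 1)
    (n : ℕ) :
    y 0 * (cfQ b (n + 1) + cfQ b n * y (n + 1)) = cfP b (n + 1) + cfP b n * y (n + 1) := by
  induction n with
  | zero => simpa [cfP, cfQ] using hy 0
  | succ n ih =>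
    simp only [cfP, cfQ, Nat.cast_add, Nat.cast_mul]
    linear_combination (b (n + 2) + y (n + 2)) * ih +
      (cfP b n - y 0 * cfQ b n) * hy (n + 1)

theorem cfQ_mul_sub_cfP_mul_eq {y : ℕ → ℝ} (hy : ∀ n, y n * (b (n + 1) + y (n + 1)) = 1)
    (n : ℕ) :
    (cfQ b n * y 0 - cfP b n) * (cfQ b (n + 1) + cfQ b n * y (n + 1)) = (-1) ^ n := by
  have hdet : (cfP b (n + 1) * cfQ b n - cfP b n * cfQ b (n + 1) : ℝ) = (-1) ^ n := by
    exact_mod_cast cfP_succ_mul_cfQ_sub_cfP_mul_cfQ_succ b n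
  linear_combination cfQ b n * mul_cfQ_add_eq_cfP_add b hy n + hdet

variable {b}

theorem cfQ_le_cfQ_succ (hb : ∀ n, 1 ≤ b (n + 1)) : ∀ n, cfQ b n ≤ cfQ b (n + 1)
  | 0 => hb 0
  | n + 1 => by
    rw [cfQ]
    nlinarith [hb (n + 1)]

theorem cfQ_succ_le_mul (hb : ∀ n, 1 ≤ b (n + 1)) :
    ∀ n, cfQ b (n + 1) ≤ (b (n + 1) + 1) * cfQ b n
  | 0 => by simp [cfQ]
  | n + 1 => by
    rw [cfQ]
    nlinarith [cfQ_le_cfQ_succ hb n]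

theorem cfQ_pos (hb : ∀ n, 1 ≤ b (n + 1)) : ∀ n, 0 < cfQ b n
  | 0 => Nat.one_pos
  | n + 1 => (cfQ_pos hb n).trans_le (cfQ_le_cfQ_succ hb n)

theorem le_cfQ (hb : ∀ n, 1 ≤ b (n + 1)) : ∀ n, n ≤ cfQ b n
  | 0 => Nat.zero_le _
  | 1 => hb 0
  | n + 2 => by
    rw [cfQ]
    nlinarith [le_cfQ hb (n + 1), hb (n + 1), cfQ_pos hb n]

theorem tendsto_cfQ_atTop (hb : ∀ n, 1 ≤ b (n + 1)) :
    Tendsto (fun n ↦ (cfQ b n : ℝ)) atTop atTop :=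
  tendsto_natCast_atTop_atTop.comp (tendsto_atTop_mono (le_cfQ hb) tendsto_id)

end Continuants

section GaussMap

theorem irrational_gaussMap {x : ℝ} (h : Irrational x) : Irrational (gaussMap x) :=
  h.inv.sub_intCast ⌊x⁻¹⌋

theorem irrational_iterate_gaussMap {x : ℝ} (h : Irrational x) (n : ℕ) :
    Irrational (gaussMap^[n] x) := by
  induction n with
  | zero => exact h
  | succ n ih => simpa only [Function.iterate_succ_apply'] using irrational_gaussMap ih

theorem gaussMap_mem_Ioo {x : ℝ} (h : Irrational x) : gaussMap x ∈ Ioo 0 1 :=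
  ⟨Int.fract_pos.2 (h.inv.ne_int _), Int.fract_lt_one _⟩

theorem iterate_gaussMap_mem_Ioo {x : ℝ} (hx : x ∈ Ico 0 1) (hirr : Irrational x) :
    ∀ n, gaussMap^[n] x ∈ Ioo 0 1
  | 0 => ⟨hx.1.lt_of_ne (by simpa using (hirr.ne_int 0).symm), hx.2⟩
  | n + 1 => by
    rw [Function.iterate_succ_apply']
    exact gaussMap_mem_Ioo (irrational_iterate_gaussMap hirr n)

theorem mul_natFloor_inv_add_gaussMap {y : ℝ} (hy : 0 < y) :
    y * (⌊y⁻¹⌋₊ + gaussMap y) = 1 := by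
  rw [gaussMap, natCast_floor_eq_intCast_floor (inv_pos.2 hy).le, Int.floor_add_fract,
    mul_inv_cancel₀ hy.ne']

variable {x : ℝ}

theorem iterate_gaussMap_mul_cfA_add (hx : x ∈ Ico 0 1) (hirr : Irrational x) (n : ℕ) :
    gaussMap^[n] x * (cfA x (n + 1) + gaussMap^[n + 1] x) = 1 := by
  rw [Function.iterate_succ_apply']
  exact mul_natFloor_inv_add_gaussMap (iterate_gaussMap_mem_Ioo hx hirr n).1

theorem one_le_cfA (hx : x ∈ Ico 0 1) (hirr : Irrational x) (n : ℕ) : 1 ≤ cfA x (n + 1) := by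
  obtain ⟨hpos, hlt⟩ := iterate_gaussMap_mem_Ioo hx hirr n
  exact Nat.le_floor (by simpa using (one_le_inv₀ hpos).2 hlt.le)

end GaussMap

theorem exists_lt_le_succ_of_tendsto {α : Type*} [LinearOrder α] {f : ℕ → α}
    (hf : Tendsto f atTop atTop) {M : ℕ} {t : α} (hM : f M < t) :
    ∃ n, M ≤ n ∧ f n < t ∧ t ≤ f (n + 1) := by
  classical
  have hex : ∃ k, M ≤ k ∧ t ≤ f k :=
    ((eventually_ge_atTop M).and (hf.eventually_ge_atTop t)).exists
  obtain ⟨hMk, htk⟩ := Nat.find_spec hex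
  have hMlt : M < Nat.find hex :=
    hMk.lt_of_ne fun h ↦ by rw [← h] at htk; exact htk.not_gt hM
  obtain ⟨n, hn⟩ : ∃ n, Nat.find hex = n + 1 := ⟨Nat.find hex - 1, by omega⟩
  have hmin := Nat.find_min hex (m := n) (by omega)
  rw [hn] at htk hMlt
  refine ⟨n, by omega, ?_, htk⟩
  contrapose! hmin
  exact ⟨by omega, hmin⟩

/-- Real-variable core of the argument, with `a = aₙ₊₁`, `b = aₙ₊₂`, `q = qₙ`, `u = qₙ₊₁`
and `y = Tⁿ⁺¹x`. -/
theorem one_lt_mul_add_mul {a b q u y ψ : ℝ} (ha : 1 ≤ a) (hb : 1 ≤ b) (hq : 0 < q)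
    (hu₀ : 0 < u) (hu : u ≤ (a + 1) * q) (hy : 1 < y * (b + 1)) (hlt : u * ψ < 1)
    (h : b * a ≤ (1 / (1 - u * ψ) - 1) / 4) :
    1 < ψ * (u + q * y) := by
  have hg : 0 < 1 - u * ψ := by linarith
  have h4 : 4 * (b * a) * (1 - u * ψ) ≤ u * ψ := by
    rw [div_sub_one hg.ne', div_div, le_div_iff₀ (by positivity)] at h
    linarith
  have hab : (a + 1) * (b + 1) ≤ 4 * (b * a) := by nlinarith
  have hprod : (a + 1) * ((b + 1) * (1 - u * ψ)) ≤ u * ψ := by nlinarith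
  have hψ : 0 < ψ := pos_of_mul_pos_right (hprod.trans_lt' (by positivity)) hu₀.le
  have hb' : (b + 1) * (1 - u * ψ) ≤ q * ψ :=
    le_of_mul_le_mul_left (hprod.trans (by nlinarith)) (by linarith)
  nlinarith [mul_pos hq hψ]

theorem abs_cfQ_mul_sub_cfP_lt {x : ℝ} (hx : x ∈ Ico 0 1) (hirr : Irrational x) {ψ : ℝ}
    {n : ℕ} (hlt : cfQ (cfA x) (n + 1) * ψ < 1)
    (h : (cfA x (n + 2) : ℝ) * cfA x (n + 1) ≤ (1 / (1 - cfQ (cfA x) (n + 1) * ψ) - 1) / 4) :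
    |cfQ (cfA x) n * x - cfP (cfA x) n| < ψ := by
  have hb := one_le_cfA hx hirr
  have hq := cfQ_pos hb n
  have hy := (iterate_gaussMap_mem_Ioo hx hirr (n + 1)).1
  have hyb : 1 < gaussMap^[n + 1] x * (cfA x (n + 2) + 1) := by
    nlinarith [(iterate_gaussMap_mem_Ioo hx hirr (n + 2)).2,
      iterate_gaussMap_mul_cfA_add hx hirr (n + 1)]
  have hD : 0 < (cfQ (cfA x) (n + 1) + cfQ (cfA x) n * gaussMap^[n + 1] x : ℝ) := by
    positivity
  have heq : |cfQ (cfA x) n * x - cfP (cfA x) n| *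
      (cfQ (cfA x) (n + 1) + cfQ (cfA x) n * gaussMap^[n + 1] x) = 1 := by
    have hsign := cfQ_mul_sub_cfP_mul_eq _ (iterate_gaussMap_mul_cfA_add hx hirr) n
    rw [Function.iterate_zero_apply] at hsign
    rw [← abs_of_pos hD, ← abs_mul, hsign, abs_neg_one_pow]
  have hmain := one_lt_mul_add_mul (a := cfA x (n + 1)) (b := cfA x (n + 2))
    (q := cfQ (cfA x) n) (u := cfQ (cfA x) (n + 1)) (y := gaussMap^[n + 1] x)
    (by exact_mod_cast hb n) (by exact_mod_cast hb (n + 1)) (by exact_mod_cast hq)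
    (by exact_mod_cast cfQ_pos hb _) (by exact_mod_cast cfQ_succ_le_mul hb n) hyb hlt h
  rw [← heq] at hmain
  exact lt_of_mul_lt_mul_right hmain hD.le

theorem kleinbock_wadleigh_improvable_general (t₀ : ℝ) (ψ : ℝ → ℝ)
    (hψmono : ∀ s t : ℝ, t₀ ≤ s → s ≤ t → ψ t ≤ ψ s)
    (hψlt : ∀ t, t₀ ≤ t → t * ψ t < 1)
    (Ψ : ℝ → ℝ) (hΨ : ∀ t, Ψ t = 1 / (1 - t * ψ t) - 1)
    (x : ℝ) (hx : x ∈ Set.Ico (0 : ℝ) 1) (hirr : Irrational x)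
    (h : ∃ N : ℕ, ∀ n, N ≤ n →
      (cfA x (n + 1) : ℝ) * (cfA x n : ℝ) ≤ Ψ ((cfQ (cfA x) n : ℝ)) / 4) :
    DirichletImprovable ψ x := by
  obtain ⟨N, hN⟩ := h
  have hq := tendsto_cfQ_atTop (one_le_cfA hx hirr)
  have hgood :
      ∀ᶠ n in atTop, |cfQ (cfA x) n * x - cfP (cfA x) n| < ψ (cfQ (cfA x) (n + 1)) := by
    filter_upwards [eventually_ge_atTop N,
      ((tendsto_add_atTop_iff_nat 1).2 hq).eventually_ge_atTop t₀] with n hn ht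
    exact abs_cfQ_mul_sub_cfP_lt hx hirr (hψlt _ ht) (hΨ _ ▸ hN (n + 1) (by omega))
  obtain ⟨M, hM⟩ := eventually_atTop.1 hgood
  refine ⟨max t₀ (cfQ (cfA x) M), fun t ht ↦ ?_⟩
  obtain ⟨n, hMn, hlt, hle⟩ :=
    exists_lt_le_succ_of_tendsto hq ((le_max_right _ _).trans_lt ht)
  refine ⟨cfP (cfA x) n, cfQ (cfA x) n, by exact_mod_cast (cfQ_pos (one_le_cfA hx hirr) n).ne',
    ?_, by simpa using hlt⟩
  calc |((cfQ (cfA x) n : ℤ) : ℝ) * x - ((cfP (cfA x) n : ℤ) : ℝ)|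
      = |cfQ (cfA x) n * x - cfP (cfA x) n| := by push_cast; rfl
    _ < ψ (cfQ (cfA x) (n + 1)) := hM n hMn
    _ ≤ ψ t := hψmono _ _ ((le_max_left _ _).trans ht.le) hle

theorem kleinbock_wadleigh_improvable (t₀ : ℝ) (ht₀ : 1 ≤ t₀) (ψ : ℝ → ℝ)
    (hψpos : ∀ t, t₀ ≤ t → 0 < ψ t)
    (hψmono : ∀ s t : ℝ, t₀ ≤ s → s ≤ t → ψ t ≤ ψ s)
    (hψlt : ∀ t, t₀ ≤ t → t * ψ t < 1)
    (Ψ : ℝ → ℝ) (hΨ : ∀ t, Ψ t = 1 / (1 - t * ψ t) - 1)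
    (x : ℝ) (hx : x ∈ Set.Ico (0 : ℝ) 1) (hirr : Irrational x)
    (h : ∃ N : ℕ, ∀ n, N ≤ n →
      (cfA x (n + 1) : ℝ) * (cfA x n : ℝ) ≤ Ψ ((cfQ (cfA x) n : ℝ)) / 4) :
    DirichletImprovable ψ x :=
  kleinbock_wadleigh_improvable_general t₀ ψ hψmono hψlt Ψ hΨ x hx hirr h
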